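/- arXiv:1611.04458 — 2 statements merged into one kernel-verified Lean document; each statement's English description precedes it below -/
import Mathlib

section
/- Let f : G → H be a semi-planar function between finite abelian groups of the same even order k, and suppose the incidence graph of S(G,H;f) is not connected. Then for i = 1, 2: any two lines L(a,b₁), L(a,b₂) ∈ S_i with the same first index a and b₁ ≠ b₂ have no common point, while any two lines L(a,b), L(c,d) ∈ S_i with a ≠ c have exactly 2 common points. -/
/-- A function `f : G → H` is *semi-planar* if for every nonzero `a : G` and every
`y : H`, the equation `f (x + a) - f x = y` has either 0 or exactly 2 solutions. -/
def IsSemiPlanar {G H : Type*} [AddGroup G] [AddGroup H] (f : G → H) : Prop :=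
  ∀ a : G, a ≠ 0 → ∀ y : H,
    Nat.card {x : G // f (x + a) - f x = y} = 0 ∨
    Nat.card {x : G // f (x + a) - f x = y} = 2

/-- The point `p = (x, y)` is incident with the line `l = L(a, b)` iff `y = f (x - a) + b`. -/
def Incid {G H : Type*} [Sub G] [Add H] (f : G → H) (p l : G × H) : Prop :=
  p.2 = f (p.1 - l.1) + l.2

/-- The adjacency relation of the incidence graph of `S(G,H;f)`: points on the left,
lines on the right, a point adjacent to a line iff incident. -/
def IncAdj {G H : Type*} [Sub G] [Add H] (f : G → H) :
    (G × H) ⊕ (G × H) → (G × H) ⊕ (G × H) → Prop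
  | Sum.inl p, Sum.inr l => Incid f p l
  | Sum.inr l, Sum.inl p => Incid f p l
  | _, _ => False

/-- The incidence graph of `S(G,H;f)`. -/
def incGraph {G H : Type*} [Sub G] [Add H] (f : G → H) :
    SimpleGraph ((G × H) ⊕ (G × H)) where
  Adj := IncAdj f
  symm := by
    constructor
    intro v w h
    cases v <;> cases w <;> exact h
  loopless := by
    constructor
    intro v h
    cases v <;> exact h

/-- The line `L(a,b)` belongs to the substructure `S₁`, i.e. lies in the same
connected component of the incidence graph as the line `L(0,0)`. -/
def InS1 {G H : Type*} [SubtractionMonoid G] [SubNegMonoid H] (f : G → H) (l : G × H) : Prop :=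
  (incGraph f).Reachable (Sum.inr l) (Sum.inr ((0 : G), (0 : H)))

/-!
A line `L(a,b)` lies in `S₁` iff `(a,b)` lies in the subgroup `K ≤ G × H` generated by the
pairs `(e, f (u + e) - f u)` with `e ≠ 0`: two lines meet iff their difference is such a pair
(or zero), and translations are automorphisms of the incidence graph.

By semi-planarity each difference set `Dₑ = {f (u + e) - f u}` has `k / 2` elements, so every
fibre of `K` over `G` has at least `k / 2` elements and `|K| ≥ k² / 2`. Disconnectedness makes
`K` proper, so `K` has index 2 and its fibre over `e ≠ 0` is exactly `Dₑ`. Two lines `L(a,b)`,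
`L(c,d)` in the same `Sᵢ` thus have `b - d ∈ D_{a-c}`, and the two solutions `x` of
`f (x + (a - c)) - f x = b - d` give their two common points.
-/

open Finset in
theorem two_mul_card_range_of_card_fiber_eq_zero_or_two {α β : Type*} [Fintype α] (φ : α → β)
    (h : ∀ b, Nat.card {a // φ a = b} = 0 ∨ Nat.card {a // φ a = b} = 2) :
    2 * Nat.card (Set.range φ) = Nat.card α := by
  classical
  have hfiber (b) (hb : b ∈ univ.image φ) : #{a | φ a = b} = 2 := by
    obtain ⟨a, -, rfl⟩ := mem_image.mp hb
    have hpos : 0 < #{a' | φ a' = φ a} := card_pos.mpr ⟨a, by simp⟩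
    have hcard := h (φ a)
    rw [Nat.card_eq_fintype_card, Fintype.card_subtype] at hcard
    omega
  rw [Nat.card_eq_fintype_card, ← Set.toFinset_card, Set.toFinset_range,
    Nat.card_eq_fintype_card, ← card_univ, card_eq_sum_card_image φ univ, sum_congr rfl hfiber,
    sum_const, smul_eq_mul, mul_comm]

namespace AddSubgroup

variable {G H : Type*} [AddGroup G] [AddGroup H] (K : AddSubgroup (G × H))

theorem card_fiber_eq_card_comap_inr {g : G} {t : H} (ht : (g, t) ∈ K) :
    Nat.card {s // (g, s) ∈ K} = Nat.card (K.comap (AddMonoidHom.inr G H)) :=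
  Nat.card_congr
    { toFun := fun s => ⟨s.1 - t, by simpa using K.sub_mem s.2 ht⟩
      invFun := fun y => ⟨y.1 + t, by simpa using K.add_mem y.2 ht⟩
      left_inv := fun s => by simp
      right_inv := fun y => by simp }

theorem card_eq_card_mul_card_comap_inr (hK : ∀ g, ∃ t, (g, t) ∈ K) :
    Nat.card K = Nat.card G * Nat.card (K.comap (AddMonoidHom.inr G H)) := by
  choose σ hσ using hK
  rw [← Nat.card_prod]
  exact Nat.card_congr
    { toFun := fun v => (v.1.1, ⟨v.1.2 - σ v.1.1, by
        have hv : v.1 - (v.1.1, σ v.1.1) = (0, v.1.2 - σ v.1.1) := by ext <;> simp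
        simpa [hv] using K.sub_mem v.2 (hσ v.1.1)⟩)
      invFun := fun w => ⟨(w.1, w.2.1 + σ w.1), by simpa using K.add_mem w.2.2 (hσ w.1)⟩
      left_inv := fun v => by simp
      right_inv := fun w => by simp }

end AddSubgroup

section IncidenceGraph

variable {G H : Type*} [AddCommGroup G] [AddCommGroup H] (f : G → H)

def diffSubgroup : AddSubgroup (G × H) :=
  AddSubgroup.closure {v | v.1 ≠ 0 ∧ ∃ u, f (u + v.1) - f u = v.2}

theorem diff_mem_diffSubgroup {e : G} (he : e ≠ 0) (u : G) :
    (e, f (u + e) - f u) ∈ diffSubgroup f :=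
  AddSubgroup.subset_closure ⟨he, u, rfl⟩

theorem graph_sub_mem_diffSubgroup (g : G) : (g, f g - f 0) ∈ diffSubgroup f := by
  by_cases hg : g = 0
  · simp [hg, Prod.mk_zero_zero]
  · simpa using diff_mem_diffSubgroup f hg 0

theorem range_diff_subset_fiber_diffSubgroup {e : G} (he : e ≠ 0) :
    Set.range (fun x => f (x + e) - f x) ⊆ {s | (e, s) ∈ diffSubgroup f} := by
  rintro _ ⟨u, rfl⟩
  exact diff_mem_diffSubgroup f he u

theorem incid_add_add (p l w : G × H) : Incid f (p + w) (l + w) ↔ Incid f p l := by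
  simp only [Incid, Prod.fst_add, Prod.snd_add, add_sub_add_right_eq_sub, ← add_assoc,
    add_left_inj]

def incGraphTranslate (w : G × H) : incGraph f ≃g incGraph f where
  toEquiv := Equiv.sumCongr (Equiv.addRight w) (Equiv.addRight w)
  map_rel_iff' := by
    rintro (p | l) (q | m) <;> simp [incGraph, IncAdj, incid_add_add]

theorem reachable_inr_add {l m : G × H} (w : G × H)
    (h : (incGraph f).Reachable (Sum.inr l) (Sum.inr m)) :
    (incGraph f).Reachable (Sum.inr (l + w)) (Sum.inr (m + w)) :=
  h.map (incGraphTranslate f w).toHom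

def lineThrough : (G × H) ⊕ (G × H) → G × H
  | Sum.inl p => (p.1, p.2 - f 0)
  | Sum.inr l => l

theorem incid_lineThrough (p : G × H) : Incid f p (lineThrough f (Sum.inl p)) := by
  simp [Incid, lineThrough]

theorem reachable_of_mem_diffSubgroup {l : G × H} (hl : l ∈ diffSubgroup f) :
    (incGraph f).Reachable (Sum.inr l) (Sum.inr 0) := by
  induction hl using AddSubgroup.closure_induction with
  | mem v hv =>
    obtain ⟨-, u, hu⟩ := hv
    -- both `L(v)` and `L(0)` pass through the point `(u + v.1, f (u + v.1))`
    have hv : (incGraph f).Adj (Sum.inr v) (Sum.inl (u + v.1, f (u + v.1))) := by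
      show f (u + v.1) = f (u + v.1 - v.1) + v.2
      rw [add_sub_cancel_right, ← hu, add_sub_cancel]
    have h0 : (incGraph f).Adj (Sum.inl (u + v.1, f (u + v.1))) (Sum.inr 0) := by
      show f (u + v.1) = f (u + v.1 - 0) + 0
      simp
    exact hv.reachable.trans h0.reachable
  | zero => rfl
  | add v w _ _ hv hw =>
    have hvw := reachable_inr_add f w hv
    rw [zero_add] at hvw
    exact hvw.trans hw
  | neg v _ hv =>
    have hv0 := reachable_inr_add f (-v) hv
    rw [add_neg_cancel, zero_add] at hv0
    exact hv0.symm

theorem sub_mem_diffSubgroup_of_incid {p l : G × H} (h : Incid f p l) :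
    lineThrough f (Sum.inl p) - l ∈ diffSubgroup f := by
  convert graph_sub_mem_diffSubgroup f (p.1 - l.1) using 1
  ext
  · rfl
  · show p.2 - f 0 - l.2 = f (p.1 - l.1) - f 0
    rw [h]
    abel

theorem sub_mem_diffSubgroup_of_adj {v w : (G × H) ⊕ (G × H)} (h : (incGraph f).Adj v w) :
    lineThrough f v - lineThrough f w ∈ diffSubgroup f := by
  rcases v with p | l <;> rcases w with q | m
  · exact h.elim
  · exact sub_mem_diffSubgroup_of_incid f h
  · simpa [lineThrough] using neg_mem (sub_mem_diffSubgroup_of_incid f h)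
  · exact h.elim

theorem sub_mem_diffSubgroup_of_reachable {v w : (G × H) ⊕ (G × H)}
    (h : (incGraph f).Reachable v w) : lineThrough f v - lineThrough f w ∈ diffSubgroup f := by
  obtain ⟨walk⟩ := h
  induction walk with
  | nil => simp
  | cons hadj _ ih =>
    simpa using add_mem (sub_mem_diffSubgroup_of_adj f hadj) ih

theorem inS1_iff_mem_diffSubgroup (l : G × H) : InS1 f l ↔ l ∈ diffSubgroup f :=
  ⟨fun h => by simpa [lineThrough, Prod.mk_zero_zero] using sub_mem_diffSubgroup_of_reachable f h,
    reachable_of_mem_diffSubgroup f⟩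

theorem diffSubgroup_ne_top (hnc : ¬ (incGraph f).Connected) : diffSubgroup f ≠ ⊤ := by
  intro htop
  have hline (l : G × H) : (incGraph f).Reachable (Sum.inr l) (Sum.inr 0) :=
    reachable_of_mem_diffSubgroup f (htop ▸ AddSubgroup.mem_top l)
  have hvertex : ∀ v, (incGraph f).Reachable v (Sum.inr 0)
    | Sum.inl p =>
      (show (incGraph f).Adj (Sum.inl p) (Sum.inr _) from incid_lineThrough f p).reachable.trans
        (hline _)
    | Sum.inr l => hline l
  exact hnc ⟨fun u v => (hvertex u).trans (hvertex v).symm⟩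

end IncidenceGraph

section Counting

variable {G H : Type*} [AddCommGroup G] [AddCommGroup H] [Fintype G] {f : G → H}

theorem IsSemiPlanar.two_mul_card_range_diff (hf : IsSemiPlanar f) {e : G} (he : e ≠ 0) :
    2 * Nat.card (Set.range fun x => f (x + e) - f x) = Fintype.card G := by
  rw [two_mul_card_range_of_card_fiber_eq_zero_or_two _ (hf e he), Nat.card_eq_fintype_card]

theorem IsSemiPlanar.index_diffSubgroup_eq_two_and_fiber_eq_range [Fintype H]
    (hf : IsSemiPlanar f) (hcard : Fintype.card G = Fintype.card H) (hne : diffSubgroup f ≠ ⊤)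
    {e : G} (he : e ≠ 0) :
    (diffSubgroup f).index = 2 ∧
      {s | (e, s) ∈ diffSubgroup f} = Set.range (fun x => f (x + e) - f x) := by
  set K := diffSubgroup f
  set c := Nat.card (K.comap (AddMonoidHom.inr G H))
  have hfiber : Nat.card {s | (e, s) ∈ K} = c :=
    K.card_fiber_eq_card_comap_inr (graph_sub_mem_diffSubgroup f e)
  have hK : Nat.card K = Fintype.card G * c := by
    rw [K.card_eq_card_mul_card_comap_inr fun g => ⟨_, graph_sub_mem_diffSubgroup f g⟩,
      Nat.card_eq_fintype_card]
  have hindex : Nat.card K * K.index = Fintype.card G * Fintype.card G := by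
    rw [K.card_mul_index, Nat.card_eq_fintype_card, Fintype.card_prod, hcard]
  have hindex_ne_one : K.index ≠ 1 := fun h => hne (AddSubgroup.index_eq_one.mp h)
  have hrange := hf.two_mul_card_range_diff he
  have hle : Nat.card (Set.range fun x => f (x + e) - f x) ≤ c := by
    rw [← hfiber]
    exact Set.ncard_le_ncard (range_diff_subset_fiber_diffSubgroup f he)
  have hk : 0 < Fintype.card G := Fintype.card_pos
  have hc : c * K.index = Fintype.card G := by
    rw [hK, mul_assoc] at hindex
    exact Nat.eq_of_mul_eq_mul_left hk hindex
  have hindex_two : K.index = 2 := by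
    have hindex_ne_zero : K.index ≠ 0 := AddSubgroup.index_ne_zero_of_finite
    have hindex_le_two : K.index ≤ 2 := by
      by_contra! h
      nlinarith
    omega
  refine ⟨hindex_two, ?_⟩
  refine (Set.eq_of_subset_of_ncard_le (range_diff_subset_fiber_diffSubgroup f he) ?_).symm
  rw [← Nat.card_coe_set_eq, ← Nat.card_coe_set_eq, hfiber]
  rw [hindex_two] at hc
  omega

end Counting

section CommonPoints

variable {G H : Type*} [AddCommGroup G] [AddCommGroup H] (f : G → H)

theorem snd_eq_of_incid_of_fst_eq {p l m : G × H} (hl : Incid f p l) (hm : Incid f p m)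
    (h : l.1 = m.1) : l.2 = m.2 := by
  rw [Incid, h] at hl
  exact add_left_cancel (hl.symm.trans hm)

def commonPointsEquiv (l m : G × H) :
    {p : G × H // Incid f p l ∧ Incid f p m} ≃
      {x : G // f (x + (l.1 - m.1)) - f x = l.2 - m.2} where
  toFun p := ⟨p.1.1 - l.1, by
    obtain ⟨⟨x, y⟩, hl, hm⟩ := p
    simp only [Incid] at hl hm
    rw [sub_add_sub_cancel, eq_sub_of_add_eq hl.symm, eq_sub_of_add_eq hm.symm]
    abel⟩
  invFun x := ⟨(x.1 + l.1, f x.1 + l.2), by simp [Incid], by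
    simp only [Incid]
    rw [add_sub_assoc, eq_add_of_sub_eq x.2]
    abel⟩
  left_inv := by
    rintro ⟨⟨x, y⟩, hl, -⟩
    simp only [Incid] at hl
    simp [hl]
  right_inv x := by simp

end CommonPoints

theorem divisible_substructures_general {G H : Type*} [AddCommGroup G] [AddCommGroup H]
    [Fintype G] [Fintype H]
    (hcard : Fintype.card G = Fintype.card H)
    (f : G → H) (hf : IsSemiPlanar f)
    (hnc : ¬ (incGraph f).Connected) :
    ∀ l m : G × H, (InS1 f l ↔ InS1 f m) →
      (l.1 = m.1 → l.2 ≠ m.2 → ¬ ∃ p : G × H, Incid f p l ∧ Incid f p m) ∧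
      (l.1 ≠ m.1 → Nat.card {p : G × H // Incid f p l ∧ Incid f p m} = 2) := by
  intro l m hlm
  refine ⟨fun h1 h2 ⟨p, hl, hm⟩ => h2 (snd_eq_of_incid_of_fst_eq f hl hm h1), fun h1 => ?_⟩
  have he : l.1 - m.1 ≠ 0 := sub_ne_zero.mpr h1
  obtain ⟨hindex, hfiber⟩ :=
    hf.index_diffSubgroup_eq_two_and_fiber_eq_range hcard (diffSubgroup_ne_top f hnc) he
  have hsub : l - m ∈ diffSubgroup f := by
    rw [sub_eq_add_neg, AddSubgroup.add_mem_iff_of_index_two hindex, neg_mem_iff,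
      ← inS1_iff_mem_diffSubgroup, ← inS1_iff_mem_diffSubgroup]
    exact hlm
  have hsol : Nonempty {x : G // f (x + (l.1 - m.1)) - f x = l.2 - m.2} := by
    obtain ⟨u, hu⟩ := hfiber.subset (show (l.1 - m.1, l.2 - m.2) ∈ diffSubgroup f from hsub)
    exact ⟨⟨u, hu⟩⟩
  rw [Nat.card_congr (commonPointsEquiv f l m)]
  exact (hf _ he _).resolve_left (Nat.card_ne_zero.mpr ⟨hsol, inferInstance⟩)

/-- If the incidence graph of `S(G,H;f)` is not connected, then for two lines in the
same substructure `Sᵢ`: lines `L(a,b₁)`, `L(a,b₂)` with `b₁ ≠ b₂` have no common point,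
while lines `L(a,b)`, `L(c,d)` with `a ≠ c` have exactly 2 common points. -/
theorem divisible_substructures {G H : Type*} [AddCommGroup G] [AddCommGroup H]
    [Fintype G] [Fintype H]
    (hcard : Fintype.card G = Fintype.card H) (heven : Even (Fintype.card G))
    (f : G → H) (hf : IsSemiPlanar f)
    (hnc : ¬ (incGraph f).Connected) :
    ∀ l m : G × H, (InS1 f l ↔ InS1 f m) →
      (l.1 = m.1 → l.2 ≠ m.2 → ¬ ∃ p : G × H, Incid f p l ∧ Incid f p m) ∧
      (l.1 ≠ m.1 → Nat.card {p : G × H // Incid f p l ∧ Incid f p m} = 2) :=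
  divisible_substructures_general hcard f hf hnc
end

section
/- Let f : G → H be a semi-planar function between finite abelian groups of the same even order k > 2, and suppose the incidence graph of S(G,H;f) is not connected. Then the set P_0^1 = {b ∈ H : L(0,b) ∈ S_1} is a subgroup of H of index 2, and P_0^2 = H \ P_0^1 is its nontrivial coset. -/
section IncidenceGraph

variable {G H : Type*} (f : G → H)

theorem incGraph_adj_inl_inr [Sub G] [Add H] {p l : G × H} :
    (incGraph f).Adj (.inl p) (.inr l) ↔ p.2 = f (p.1 - l.1) + l.2 :=
  Iff.rfl

def incGraphShift [Sub G] [AddSemigroup H] (h : H) : incGraph f →g incGraph f where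
  toFun := Sum.map (Prod.map id (· + h)) (Prod.map id (· + h))
  map_rel' := by
    rintro (p | l) (p' | l') hadj <;>
      first
      | exact (hadj : False).elim
      | exact (congrArg (· + h) hadj).trans (add_assoc _ _ _)

variable [AddCommGroup G] [AddCommGroup H]

theorem InS1.reachable_shift {b : H} (hb : InS1 f (0, b)) (h : H) :
    (incGraph f).Reachable (.inr (0, b + h)) (.inr (0, h)) := by
  simpa [incGraphShift] using hb.map (incGraphShift f h)

/-- The set `P_0^1` of the paper. -/
def s1Subgroup : AddSubgroup H where
  carrier := {b | InS1 f (0, b)}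
  zero_mem' := .refl _
  add_mem' {_ b'} hb hb' := (InS1.reachable_shift f hb b').trans hb'
  neg_mem' {b} hb := by simpa [InS1] using (InS1.reachable_shift f hb (-b)).symm

theorem mem_s1Subgroup {b : H} : b ∈ s1Subgroup f ↔ InS1 f (0, b) :=
  Iff.rfl

theorem exists_reachable_inr_zero (v : (G × H) ⊕ (G × H)) :
    ∃ b, (incGraph f).Reachable v (.inr (0, b)) := by
  rcases v with ⟨x, y⟩ | ⟨a, b⟩
  · exact ⟨y - f x, ((incGraph_adj_inl_inr f).mpr (by simp)).reachable⟩
  · have h₁ : (incGraph f).Adj (.inl (a, f 0 + b)) (.inr (a, b)) :=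
      (incGraph_adj_inl_inr f).mpr (by simp)
    have h₂ : (incGraph f).Adj (.inl (a, f 0 + b)) (.inr (0, f 0 + b - f a)) :=
      (incGraph_adj_inl_inr f).mpr (by simp)
    exact ⟨_, h₁.symm.reachable.trans h₂.reachable⟩

theorem incGraph_connected_of_s1Subgroup_eq_top (htop : s1Subgroup f = ⊤) :
    (incGraph f).Connected := by
  rw [SimpleGraph.connected_iff_exists_forall_reachable]
  refine ⟨.inr (0, 0), fun v => ?_⟩
  obtain ⟨b, hb⟩ := exists_reachable_inr_zero f v
  exact (hb.trans ((mem_s1Subgroup f).mp (htop ▸ AddSubgroup.mem_top b))).symm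

/-- With `Δx = f (x + a) - f x`, the path is
`L(0, Δx₁ - Δx₀) — (x₀ + a, f x₀ + Δx₁) — L(a, Δx₁) — (x₁ + a, f (x₁ + a)) — L(0, 0)`. -/
theorem sub_mem_s1Subgroup (a x₀ x₁ : G) :
    (f (x₁ + a) - f x₁) - (f (x₀ + a) - f x₀) ∈ s1Subgroup f := by
  have h₁ : (incGraph f).Adj (.inl (x₀ + a, f x₀ + (f (x₁ + a) - f x₁)))
      (.inr (0, (f (x₁ + a) - f x₁) - (f (x₀ + a) - f x₀))) :=
    (incGraph_adj_inl_inr f).mpr (by simp only [sub_zero]; abel)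
  have h₂ : (incGraph f).Adj (.inl (x₀ + a, f x₀ + (f (x₁ + a) - f x₁)))
      (.inr (a, f (x₁ + a) - f x₁)) :=
    (incGraph_adj_inl_inr f).mpr (by simp)
  have h₃ : (incGraph f).Adj (.inl (x₁ + a, f (x₁ + a))) (.inr (a, f (x₁ + a) - f x₁)) :=
    (incGraph_adj_inl_inr f).mpr (by simp)
  have h₄ : (incGraph f).Adj (.inl (x₁ + a, f (x₁ + a))) (.inr (0, 0)) :=
    (incGraph_adj_inl_inr f).mpr (by simp)
  exact h₁.symm.reachable.trans <| h₂.reachable.trans <| h₃.symm.reachable.trans h₄.reachable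

end IncidenceGraph

open Finset in
theorem Finset.card_eq_mul_card_image_of_card_fiber_eq {α β : Type*} [DecidableEq β]
    (g : α → β) (s : Finset α) {n : ℕ} (hn : ∀ y ∈ s.image g, #{x ∈ s | g x = y} = n) :
    #s = n * #(s.image g) := by
  rw [card_eq_sum_card_image g s, sum_const_nat hn, mul_comm]

open Finset in
theorem IsSemiPlanar.card_eq_two_mul_card_image {G H : Type*} [AddGroup G] [AddGroup H]
    [Fintype G] [DecidableEq H] {f : G → H} (hf : IsSemiPlanar f) {a : G} (ha : a ≠ 0) :
    Fintype.card G = 2 * #(univ.image fun x => f (x + a) - f x) := by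
  refine card_eq_mul_card_image_of_card_fiber_eq _ _ fun y hy => ?_
  have hfiber : Nat.card {x // f (x + a) - f x = y} = #{x | f (x + a) - f x = y} := by
    rw [Nat.card_eq_fintype_card, Fintype.card_subtype]
  obtain ⟨x, -, hx⟩ := mem_image.mp hy
  have hpos : 0 < #{x | f (x + a) - f x = y} := card_pos.mpr ⟨x, by simpa using hx⟩
  rcases hf a ha y with h | h <;> omega

theorem AddSubgroup.card_le_card_of_forall_sub_mem {H : Type*} [AddGroup H] [Finite H]
    (B : AddSubgroup H) (s : Finset H) (c : H) (hs : ∀ x ∈ s, c - x ∈ B) :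
    s.card ≤ Nat.card B := by
  have hinj : Function.Injective fun x : s => (⟨c - x, hs x x.2⟩ : B) :=
    fun x y hxy => Subtype.ext (sub_right_injective (congrArg Subtype.val hxy))
  simpa using Nat.card_le_card_of_injective _ hinj

theorem AddSubgroup.compl_eq_image_add_left_of_index_eq_two {H : Type*} [AddGroup H]
    {B : AddSubgroup H} (hB : B.index = 2) {h : H} (hh : h ∉ B) :
    (B : Set H)ᶜ = (h + ·) '' B := by
  ext b
  simp [Set.image_add_left, B.add_mem_iff_of_index_two hB, hh]

section Counting

variable {G H : Type*} [AddCommGroup G] [AddCommGroup H] [Fintype G] [Fintype H] {f : G → H}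

theorem IsSemiPlanar.card_le_two_mul_card_s1Subgroup (hf : IsSemiPlanar f) :
    Fintype.card G ≤ 2 * Nat.card (s1Subgroup f) := by
  classical
  rcases subsingleton_or_nontrivial G with hG | _
  · have := Nat.card_pos (α := s1Subgroup f)
    have := Fintype.card_le_one_iff_subsingleton.mpr hG
    omega
  obtain ⟨a, ha⟩ := exists_ne (0 : G)
  rw [hf.card_eq_two_mul_card_image ha]
  gcongr
  refine (s1Subgroup f).card_le_card_of_forall_sub_mem _ (f a - f 0) fun d hd => ?_
  obtain ⟨x, -, rfl⟩ := Finset.mem_image.mp hd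
  simpa using sub_mem_s1Subgroup f a x 0

theorem IsSemiPlanar.index_s1Subgroup_le_two (hcard : Fintype.card G = Fintype.card H)
    (hf : IsSemiPlanar f) : (s1Subgroup f).index ≤ 2 := by
  have hmul := (s1Subgroup f).index_mul_card
  rw [Nat.card_eq_fintype_card (α := H), ← hcard] at hmul
  exact Nat.le_of_mul_le_mul_right (hmul.trans_le hf.card_le_two_mul_card_s1Subgroup) Nat.card_pos

end Counting

theorem P01_subgroup_index_two_general {G H : Type*} [AddCommGroup G] [AddCommGroup H]
    [Fintype G] [Fintype H]
    (hcard : Fintype.card G = Fintype.card H)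
    (f : G → H) (hf : IsSemiPlanar f)
    (hnc : ¬ (incGraph f).Connected) :
    ∃ B : AddSubgroup H, B.index = 2 ∧
      (B : Set H) = {b : H | InS1 f ((0 : G), b)} ∧
      ∀ h : H, h ∉ B → {b : H | ¬ InS1 f ((0 : G), b)} = (fun x => h + x) '' (B : Set H) := by
  have hle := hf.index_s1Subgroup_le_two hcard
  have hne_one : (s1Subgroup f).index ≠ 1 :=
    mt (AddSubgroup.index_eq_one.mp ·) (mt (incGraph_connected_of_s1Subgroup_eq_top f) hnc)
  have hne_zero : (s1Subgroup f).index ≠ 0 := AddSubgroup.index_ne_zero_of_finite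
  have hidx : (s1Subgroup f).index = 2 := by omega
  exact ⟨s1Subgroup f, hidx, rfl,
    fun h hh => AddSubgroup.compl_eq_image_add_left_of_index_eq_two hidx hh⟩

/-- If `k > 2` and the incidence graph of `S(G,H;f)` is not connected, then
`P_0^1` is a subgroup of `H` of index 2 and `P_0^2` is its nontrivial coset. -/
theorem P01_subgroup_index_two {G H : Type*} [AddCommGroup G] [AddCommGroup H]
    [Fintype G] [Fintype H]
    (hcard : Fintype.card G = Fintype.card H) (heven : Even (Fintype.card G))
    (f : G → H) (hf : IsSemiPlanar f)
    (hk : 2 < Fintype.card G) (hnc : ¬ (incGraph f).Connected) :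
    ∃ B : AddSubgroup H, B.index = 2 ∧
      (B : Set H) = {b : H | InS1 f ((0 : G), b)} ∧
      ∀ h : H, h ∉ B → {b : H | ¬ InS1 f ((0 : G), b)} = (fun x => h + x) '' (B : Set H) :=
  P01_subgroup_index_two_general hcard f hf hnc
end
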